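/- Let q_1, q_2 : [0,2π)^ν → ℝ be bounded measurable with η ≤ q_k(x) ≤ M a.e. for some 0 < η ≤ M, set r_k := q_k/(1 + q_k), and define ψ(t) := −(2π)^{−ν} ∫_{[0,2π)^ν} log[ (1 + q_1(x))^t (1 + q_2(x))^{1−t} − q_1(x)^t q_2(x)^{1−t} ] dx for t ∈ [0,1]. Then the one-sided derivatives of ψ at the endpoints exist and are given by ∂⁻ψ(1) = (2π)^{−ν} ∫ (1 + q_1(x)) S_2( r_1(x) ‖ r_2(x) ) dx and ∂⁺ψ(0) = −(2π)^{−ν} ∫ (1 + q_2(x)) S_2( r_2(x) ‖ r_1(x) ) dx, where for scalars 0 < a, b < 1, S_2(a‖b) := a(log a − log b) + (1−a)(log(1−a) − log(1−b)). -/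

import Mathlib

/-!
Write `u(t) = t log(1+q₁) + (1-t) log(1+q₂)` and `v(t) = t log q₁ + (1-t) log q₂`, so that the
integrand of `ψ` is `log (exp u - exp v)`. Since `u - v = t ℓ(q₁) + (1-t) ℓ(q₂)` with
`ℓ(x) = log(1+x) - log x` decreasing and positive, `u - v ≥ ℓ(M)/2` for all `t` in a window around
`1` that depends only on `η, M`. On that window the `t`-derivative of the integrand is bounded
uniformly in `x`, so `ψ` can be differentiated under the integral sign at `t = 1`, where the
integrand vanishes and its derivative is `-(1+q₁) S₂(r₁‖r₂)`. The endpoint `t = 0` follows from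
`ψ_{q₁,q₂}(t) = ψ_{q₂,q₁}(1-t)`.
-/

open MeasureTheory Filter Set

noncomputable section

/-- The cube `[0, 2π)^ν`. -/
def cube (ν : ℕ) : Set (Fin ν → ℝ) := Set.univ.pi fun _ => Set.Ico 0 (2 * Real.pi)

/-- `ψ(t) = −(2π)^{−ν} ∫ log[(1+q₁(x))^t (1+q₂(x))^{1−t} − q₁(x)^t q₂(x)^{1−t}] dx`. -/
def psiLimit {ν : ℕ} (q₁ q₂ : (Fin ν → ℝ) → ℝ) (t : ℝ) : ℝ :=
  -(((2 * Real.pi) ^ ν : ℝ)⁻¹ *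
    ∫ x in cube ν,
      Real.log ((1 + q₁ x) ^ t * (1 + q₂ x) ^ (1 - t) - (q₁ x) ^ t * (q₂ x) ^ (1 - t)))

/-- Scalar `S₂(a‖b) = a(log a − log b) + (1−a)(log(1−a) − log(1−b))` for `0 < a, b < 1`. -/
def S2s (a b : ℝ) : ℝ :=
  a * (Real.log a - Real.log b) + (1 - a) * (Real.log (1 - a) - Real.log (1 - b))

open Real

section Scalar

variable {a b t x y η M : ℝ}

lemma hasDerivAt_log_exp_sub_exp {u v : ℝ → ℝ} {u' v' : ℝ} (hu : HasDerivAt u u' t)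
    (hv : HasDerivAt v v' t) (h : v t < u t) :
    HasDerivAt (fun s => log (exp (u s) - exp (v s)))
      ((u' * exp (u t) - v' * exp (v t)) / (exp (u t) - exp (v t))) t :=
  ((hu.exp.sub hv.exp).log (sub_ne_zero.2 (exp_lt_exp.2 h).ne')).congr_deriv
    (by simp only [Pi.sub_apply]; ring)

lemma abs_div_exp_sub_exp_le {u v u' v' Cu Cv δ : ℝ} (hδ : 0 < δ) (huv : δ ≤ u - v)
    (hu' : |u'| ≤ Cu) (hv' : |v'| ≤ Cv) :
    |(u' * exp u - v' * exp v) / (exp u - exp v)| ≤ (Cu + Cv) / (1 - exp (-δ)) := by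
  have hvu : exp v ≤ exp u * exp (-δ) := by
    rw [← exp_add]; exact exp_le_exp.2 (by linarith)
  have hδ1 : exp (-δ) < 1 := exp_lt_one_iff.2 (by linarith)
  have hden : exp u * (1 - exp (-δ)) ≤ exp u - exp v := by nlinarith
  have hden_pos : 0 < exp u * (1 - exp (-δ)) := mul_pos (exp_pos u) (by linarith)
  have hnum : |u' * exp u - v' * exp v| ≤ (Cu + Cv) * exp u :=
    calc |u' * exp u - v' * exp v| ≤ |u'| * exp u + |v'| * exp v :=
          (abs_sub _ _).trans_eq (by rw [abs_mul, abs_mul, abs_of_pos (exp_pos u),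
            abs_of_pos (exp_pos v)])
      _ ≤ Cu * exp u + Cv * exp u := by
          gcongr
          · exact (abs_nonneg _).trans hv'
          · nlinarith [exp_pos u]
      _ = (Cu + Cv) * exp u := by ring
  rw [abs_div, abs_of_pos (hden_pos.trans_le hden)]
  calc |u' * exp u - v' * exp v| / (exp u - exp v)
      ≤ (Cu + Cv) * exp u / (exp u * (1 - exp (-δ))) :=
        div_le_div₀ ((abs_nonneg _).trans hnum) hnum hden_pos hden
    _ = (Cu + Cv) / (1 - exp (-δ)) := by
        rw [mul_comm (exp u)]; exact mul_div_mul_right _ _ (exp_ne_zero u)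

lemma abs_log_sub_log_le (hη : 0 < η) (ha : a ∈ Icc η M) (hb : b ∈ Icc η M) :
    |log a - log b| ≤ log M - log η := by
  have key : ∀ {x}, x ∈ Icc η M → log η ≤ log x ∧ log x ≤ log M := fun hx =>
    ⟨log_le_log hη hx.1, log_le_log (hη.trans_le hx.1) hx.2⟩
  rw [abs_le]; constructor <;> linarith [key ha, key hb]

def logInterp (a b t : ℝ) : ℝ := t * log a + (1 - t) * log b

lemma rpow_mul_rpow_one_sub (ha : 0 < a) (hb : 0 < b) (t : ℝ) :
    a ^ t * b ^ (1 - t) = exp (logInterp a b t) := by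
  rw [rpow_def_of_pos ha, rpow_def_of_pos hb, ← exp_add, logInterp]; ring_nf

lemma hasDerivAt_logInterp (a b t : ℝ) : HasDerivAt (logInterp a b) (log a - log b) t := by
  have := ((hasDerivAt_id t).mul_const (log a)).add
    (((hasDerivAt_id t).const_sub 1).mul_const (log b))
  exact this.congr_deriv (by simp only [one_mul, neg_mul]; ring)

/-- `ℓ(x) = -log r` for `r = x / (1 + x)`. -/
def logRatio (x : ℝ) : ℝ := log (1 + x) - log x

lemma logRatio_pos (hx : 0 < x) : 0 < logRatio x :=
  sub_pos.2 (log_lt_log hx (by linarith))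

lemma logRatio_anti (hx : 0 < x) (hxy : x ≤ y) : logRatio y ≤ logRatio x := by
  have hy : 0 < y := hx.trans_le hxy
  rw [logRatio, logRatio, ← log_div (by linarith) hy.ne', ← log_div (by linarith) hx.ne']
  refine log_le_log (by positivity) ?_
  rw [div_le_div_iff₀ hy hx]
  linarith

lemma logInterp_sub_logInterp (a b t : ℝ) :
    logInterp (1 + a) (1 + b) t - logInterp a b t = t * logRatio a + (1 - t) * logRatio b := by
  unfold logInterp logRatio; ring

lemma half_logRatio_le_logInterp_sub (hη : 0 < η) (ha : a ∈ Icc η M) (hb : b ∈ Icc η M)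
    (ht : |t - 1| ≤ logRatio M / (2 * logRatio η)) :
    logRatio M / 2 ≤ logInterp (1 + a) (1 + b) t - logInterp a b t := by
  have hLη := logRatio_pos hη
  have hLM := logRatio_pos (hη.trans_le (ha.1.trans ha.2))
  have bounds : ∀ {x}, x ∈ Icc η M → 0 < logRatio x ∧ logRatio M ≤ logRatio x ∧
      logRatio x ≤ logRatio η := fun hx =>
    ⟨logRatio_pos (hη.trans_le hx.1), logRatio_anti (hη.trans_le hx.1) hx.2,
      logRatio_anti hη hx.1⟩
  have hdiff : |logRatio b - logRatio a| ≤ logRatio η := by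
    rw [abs_le]; constructor <;> linarith [bounds ha, bounds hb]
  have hprod : |(1 - t) * (logRatio b - logRatio a)| ≤ logRatio M / 2 :=
    calc |(1 - t) * (logRatio b - logRatio a)|
        ≤ logRatio M / (2 * logRatio η) * logRatio η := by
          rw [abs_mul, abs_sub_comm]; exact mul_le_mul ht hdiff (abs_nonneg _) (by positivity)
      _ = logRatio M / 2 := by field_simp
  rw [logInterp_sub_logInterp]
  linarith [(abs_le.1 hprod).1, bounds ha]

def logGapDeriv (a b t : ℝ) : ℝ :=
  ((log (1 + a) - log (1 + b)) * exp (logInterp (1 + a) (1 + b) t)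
      - (log a - log b) * exp (logInterp a b t)) /
    (exp (logInterp (1 + a) (1 + b) t) - exp (logInterp a b t))

lemma hasDerivAt_log_rpow_gap (ha : 0 < a) (hb : 0 < b)
    (h : logInterp a b t < logInterp (1 + a) (1 + b) t) :
    HasDerivAt (fun s => log ((1 + a) ^ s * (1 + b) ^ (1 - s) - a ^ s * b ^ (1 - s)))
      (logGapDeriv a b t) t := by
  simp_rw [rpow_mul_rpow_one_sub (by linarith : 0 < 1 + a) (by linarith : 0 < 1 + b),
    rpow_mul_rpow_one_sub ha hb]
  exact hasDerivAt_log_exp_sub_exp (hasDerivAt_logInterp _ _ t) (hasDerivAt_logInterp _ _ t) h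

lemma logGapDeriv_one (ha : 0 < a) (hb : 0 < b) :
    logGapDeriv a b 1 = -((1 + a) * S2s (a / (1 + a)) (b / (1 + b))) := by
  have h1a : 0 < 1 + a := by linarith
  have h1b : 0 < 1 + b := by linarith
  have hr : ∀ {x : ℝ}, 0 < 1 + x → 1 - x / (1 + x) = (1 + x)⁻¹ := fun hx => by field_simp; ring
  simp only [logGapDeriv, logInterp, S2s, one_mul, sub_self, zero_mul, add_zero,
    exp_log h1a, exp_log ha, hr h1a, hr h1b, log_div ha.ne' h1a.ne', log_div hb.ne' h1b.ne',
    log_inv]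
  field_simp
  ring

lemma exists_uniform_bound_logGapDeriv (hη : 0 < η) (hηM : η ≤ M) :
    ∃ ε > 0, ∃ K, ∀ a ∈ Icc η M, ∀ b ∈ Icc η M, ∀ t ∈ Metric.ball (1 : ℝ) ε,
      logInterp a b t < logInterp (1 + a) (1 + b) t ∧ |logGapDeriv a b t| ≤ K := by
  have hLM := logRatio_pos (hη.trans_le hηM)
  have hLη := logRatio_pos hη
  refine ⟨logRatio M / (2 * logRatio η), by positivity,
    (log (1 + M) - log (1 + η) + (log M - log η)) / (1 - exp (-(logRatio M / 2))),
    fun a ha b hb t ht => ?_⟩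
  rw [Metric.mem_ball, dist_eq] at ht
  have hgap := half_logRatio_le_logInterp_sub hη ha hb ht.le
  have shift : ∀ {x}, x ∈ Icc η M → 1 + x ∈ Icc (1 + η) (1 + M) := fun hx =>
    ⟨by linarith [hx.1], by linarith [hx.2]⟩
  exact ⟨by linarith, abs_div_exp_sub_exp_le (by positivity) hgap
    (abs_log_sub_log_le (by linarith) (shift ha) (shift hb)) (abs_log_sub_log_le hη ha hb)⟩

end Scalar

theorem hasDerivAt_integral_log_rpow_gap {α : Type*} [MeasurableSpace α] {μ : Measure α}
    [IsFiniteMeasure μ] {q₁ q₂ : α → ℝ} {η M : ℝ} (hη : 0 < η) (hηM : η ≤ M)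
    (hm₁ : AEMeasurable q₁ μ) (hm₂ : AEMeasurable q₂ μ)
    (hq₁ : ∀ᵐ x ∂μ, q₁ x ∈ Icc η M) (hq₂ : ∀ᵐ x ∂μ, q₂ x ∈ Icc η M) :
    HasDerivAt
      (fun t : ℝ => ∫ x, log ((1 + q₁ x) ^ t * (1 + q₂ x) ^ (1 - t) - q₁ x ^ t * q₂ x ^ (1 - t)) ∂μ)
      (-∫ x, (1 + q₁ x) * S2s (q₁ x / (1 + q₁ x)) (q₂ x / (1 + q₂ x)) ∂μ) 1 := by
  obtain ⟨ε, hε, K, hK⟩ := exists_uniform_bound_logGapDeriv hη hηM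
  have hq := hq₁.and hq₂
  have hpos : ∀ {a}, a ∈ Icc η M → 0 < a := fun ha => hη.trans_le ha.1
  have hF'₁ : ∫ x, logGapDeriv (q₁ x) (q₂ x) 1 ∂μ =
      -∫ x, (1 + q₁ x) * S2s (q₁ x / (1 + q₁ x)) (q₂ x / (1 + q₂ x)) ∂μ := by
    rw [← integral_neg]
    exact integral_congr_ae (hq.mono fun x hx => logGapDeriv_one (hpos hx.1) (hpos hx.2))
  rw [← hF'₁]
  refine (hasDerivAt_integral_of_dominated_loc_of_deriv_le (Metric.ball_mem_nhds (1 : ℝ) hε)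
    (F' := fun t x => logGapDeriv (q₁ x) (q₂ x) t) (bound := fun _ => K) ?_ ?_ ?_ ?_
    (integrable_const (μ := μ) K) ?_).2
  · exact Eventually.of_forall fun t => (by fun_prop : AEMeasurable _ μ).aestronglyMeasurable
  · simp
  · unfold logGapDeriv logInterp
    exact (by fun_prop : AEMeasurable _ μ).aestronglyMeasurable
  · exact hq.mono fun x hx t ht => (hK _ hx.1 _ hx.2 t ht).2
  · exact hq.mono fun x hx t ht =>
      hasDerivAt_log_rpow_gap (hpos hx.1) (hpos hx.2) (hK _ hx.1 _ hx.2 t ht).1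

lemma volume_cube_lt_top (ν : ℕ) : volume (cube ν) < ⊤ := by
  rw [cube, volume_pi_pi]
  simp only [Real.volume_Ico, Finset.prod_const, Finset.card_univ, Fintype.card_fin]
  exact ENNReal.pow_lt_top ENNReal.ofReal_lt_top

theorem hasDerivAt_psiLimit_one {ν : ℕ} {q₁ q₂ : (Fin ν → ℝ) → ℝ} {η M : ℝ} (hη : 0 < η)
    (hηM : η ≤ M) (hm₁ : AEMeasurable q₁ (volume.restrict (cube ν)))
    (hm₂ : AEMeasurable q₂ (volume.restrict (cube ν)))
    (hq₁ : ∀ᵐ x ∂(volume.restrict (cube ν)), q₁ x ∈ Icc η M)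
    (hq₂ : ∀ᵐ x ∂(volume.restrict (cube ν)), q₂ x ∈ Icc η M) :
    HasDerivAt (psiLimit q₁ q₂)
      (((2 * π) ^ ν : ℝ)⁻¹ *
        ∫ x in cube ν, (1 + q₁ x) * S2s (q₁ x / (1 + q₁ x)) (q₂ x / (1 + q₂ x))) 1 := by
  have : IsFiniteMeasure (volume.restrict (cube ν)) :=
    isFiniteMeasure_restrict.2 (volume_cube_lt_top ν).ne
  have h := ((hasDerivAt_integral_log_rpow_gap hη hηM hm₁ hm₂ hq₁ hq₂).const_mul
    ((2 * π) ^ ν : ℝ)⁻¹).neg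
  rwa [mul_neg, neg_neg] at h

lemma psiLimit_swap {ν : ℕ} (q₁ q₂ : (Fin ν → ℝ) → ℝ) (t : ℝ) :
    psiLimit q₂ q₁ (1 - t) = psiLimit q₁ q₂ t := by
  simp only [psiLimit, sub_sub_cancel, mul_comm]

theorem psiLimit_one_sided_derivatives {ν : ℕ}
    (q₁ q₂ : (Fin ν → ℝ) → ℝ) (η M : ℝ) (hη : 0 < η) (hηM : η ≤ M)
    (hmeas₁ : Measurable q₁) (hmeas₂ : Measurable q₂)
    (hq₁ : ∀ᵐ x ∂(volume.restrict (cube ν)), q₁ x ∈ Set.Icc η M)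
    (hq₂ : ∀ᵐ x ∂(volume.restrict (cube ν)), q₂ x ∈ Set.Icc η M) :
    HasDerivWithinAt (psiLimit q₁ q₂)
        (((2 * Real.pi) ^ ν : ℝ)⁻¹ *
          ∫ x in cube ν,
            (1 + q₁ x) * S2s (q₁ x / (1 + q₁ x)) (q₂ x / (1 + q₂ x)))
        (Set.Iic 1) 1 ∧
      HasDerivWithinAt (psiLimit q₁ q₂)
        (-(((2 * Real.pi) ^ ν : ℝ)⁻¹ *
          ∫ x in cube ν,
            (1 + q₂ x) * S2s (q₂ x / (1 + q₂ x)) (q₁ x / (1 + q₁ x))))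
        (Set.Ici 0) 0 := by
  refine ⟨(hasDerivAt_psiLimit_one hη hηM hmeas₁.aemeasurable hmeas₂.aemeasurable hq₁ hq₂)
    |>.hasDerivWithinAt, ?_⟩
  have h₁ := hasDerivAt_psiLimit_one hη hηM hmeas₂.aemeasurable hmeas₁.aemeasurable hq₂ hq₁
  have h₀ := HasDerivAt.comp_const_sub (1 : ℝ) 0 (by rwa [sub_zero])
  simpa only [psiLimit_swap] using h₀.hasDerivWithinAt (s := Ici 0)

end
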